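/- arXiv:2605.26374 — 2 statements merged into one kernel-verified Lean document; each statement's English description precedes it below -/
import Mathlib

section
/- Let R be a semi-graded ring and E a semi-graded left R-module that is an injective object in the category of semi-graded left R-modules with homogeneous degree-zero morphisms. Then for every semi-graded left ideal J ⊆ R and every homogeneous R-module homomorphism g : J → E, there exists an element x ∈ E_0 such that g(r) = r·x for all r ∈ J. -/
open DirectSum

def SGRing (R : Type) [Ring R] (𝒜 : ℤ → AddSubgroup R) : Prop :=
  DirectSum.IsInternal 𝒜 ∧
  (∀ m n : ℤ, ∀ a ∈ 𝒜 m, ∀ b ∈ 𝒜 n, a * b ∈ ⨆ k ≤ m + n, 𝒜 k) ∧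
  (1 : R) ∈ 𝒜 0

def SGModule (R : Type) [Ring R] (𝒜 : ℤ → AddSubgroup R)
    (M : Type) [AddCommGroup M] [Module R M] (ℳ : ℤ → AddSubgroup M) : Prop :=
  DirectSum.IsInternal ℳ ∧
  ∀ m : ℤ, 0 ≤ m → ∀ n : ℤ, ∀ r ∈ 𝒜 m, ∀ x ∈ ℳ n, r • x ∈ ⨆ k ≤ m + n, ℳ k

def IsSGSub {M : Type} [AddCommGroup M] (ℳ : ℤ → AddSubgroup M) (N : AddSubgroup M) : Prop :=
  DirectSum.IsInternal (fun n : ℤ => (N ⊓ ℳ n).addSubgroupOf N)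

theorem baer_necessity
    (R : Type) [Ring R] (𝒜 : ℤ → AddSubgroup R) (hR : SGRing R 𝒜)
    (E : Type) [AddCommGroup E] [Module R E] (ℰ : ℤ → AddSubgroup E)
    (hE : SGModule R 𝒜 E ℰ)
    -- E is an injective object in the category of semi-graded modules:
    (hInj : ∀ (B : Type) [AddCommGroup B] [Module R B], ∀ (ℬ : ℤ → AddSubgroup B),
      SGModule R 𝒜 B ℬ → ∀ A : Submodule R B, IsSGSub ℬ A.toAddSubgroup →
      ∀ f : A →ₗ[R] E, (∀ k : ℤ, ∀ a : A, (a : B) ∈ ℬ k → f a ∈ ℰ k) →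
      ∃ F : B →ₗ[R] E, (∀ k : ℤ, ∀ b ∈ ℬ k, F b ∈ ℰ k) ∧ ∀ a : A, F a = f a)
    (J : Submodule R R) (hJ : IsSGSub 𝒜 J.toAddSubgroup)
    (g : J →ₗ[R] E) (hg : ∀ k : ℤ, ∀ r : J, (r : R) ∈ 𝒜 k → g r ∈ ℰ k) :
    ∃ x ∈ ℰ 0, ∀ r : J, g r = (r : R) • x := by
  have hRmod : SGModule R 𝒜 R 𝒜 :=
    ⟨hR.1, fun m _ n r hr x hx => hR.2.1 m n r hr x hx⟩
  obtain ⟨F, hF1, hF2⟩ := hInj R 𝒜 hRmod J hJ g hg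
  refine ⟨F 1, hF1 0 1 hR.2.2, fun r => ?_⟩
  rw [← hF2 r]
  calc F r = F ((r : R) • (1 : R)) := by rw [smul_eq_mul, mul_one]
    _ = (r : R) • F 1 := F.map_smul _ _
end

section
/- Let R be a semi-graded ring and f : M → N a homogeneous homomorphism of semi-graded left R-modules which is injective. Then f is a kernel of the canonical projection j : N → N/Im(f) in the category of semi-graded modules: j ∘ f = 0, and for every homogeneous morphism g : P → N with j ∘ g = 0 there is a unique homogeneous morphism h : P → M with f ∘ h = g. -/
open DirectSum

/-!
Since `f` is injective and `g` lands in `range f ≅ M`, `g` factors uniquely as `f ∘ h` by a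
linear map `h`; the only point is that `h` is homogeneous, i.e. that `f x ∈ 𝒩 n` forces
`x ∈ ℳ n`. The subgroups `f⁻¹(𝒩 n)` are independent because `f` is injective, they contain the
`ℳ n`, and the `ℳ n` already span `M`; in the modular lattice of subgroups this forces
`ℳ n = f⁻¹(𝒩 n)`.
-/
theorem AddSubgroup.iSupIndep_comap {ι M N : Type*} [AddCommGroup M] [AddCommGroup N]
    {𝒩 : ι → AddSubgroup N} (h𝒩 : iSupIndep 𝒩) {f : M →+ N} (hf : Function.Injective f) :
    iSupIndep fun i => (𝒩 i).comap f := by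
  intro i
  refine AddSubgroup.disjoint_def.mpr fun {x} hxi hx => (injective_iff_map_eq_zero f).mp hf x ?_
  have hsup : ⨆ (j) (_ : j ≠ i), (𝒩 j).comap f ≤ (⨆ (j) (_ : j ≠ i), 𝒩 j).comap f :=
    iSup₂_le fun j hj => AddSubgroup.comap_mono (le_iSup₂_of_le j hj le_rfl)
  exact AddSubgroup.disjoint_def.mp (h𝒩 i) hxi (hsup hx)

theorem DirectSum.IsInternal.addSubgroup_iSup_eq_top {ι G : Type*} [DecidableEq ι]
    [AddCommGroup G] {A : ι → AddSubgroup G} (h : IsInternal A) : iSup A = ⊤ := by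
  rw [eq_top_iff]
  rintro x -
  obtain ⟨d, rfl⟩ := h.2 x
  induction d using DirectSum.induction_on with
  | zero => exact zero_mem _
  | of i y => exact (DirectSum.coeAddMonoidHom_of A i y).symm ▸ AddSubgroup.mem_iSup_of_mem i y.2
  | add d e hd he => exact (map_add (DirectSum.coeAddMonoidHom A) d e).symm ▸ add_mem hd he

theorem AddSubgroup.eq_comap_of_injective_of_mapsTo {ι M N : Type*} [AddCommGroup M]
    [AddCommGroup N] {ℳ : ι → AddSubgroup M} {𝒩 : ι → AddSubgroup N} (hℳ : iSup ℳ = ⊤)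
    (h𝒩 : iSupIndep 𝒩) {f : M →+ N} (hf : Function.Injective f)
    (hmaps : ∀ i, ∀ x ∈ ℳ i, f x ∈ 𝒩 i) :
    ℳ = fun i => (𝒩 i).comap f :=
  ((AddSubgroup.iSupIndep_comap h𝒩 hf).le_iff_eq_of_iSup_eq_top hℳ).mp hmaps

theorem LinearMap.exists_comp_eq_of_range_le {R M N P : Type*} [Ring R] [AddCommGroup M]
    [AddCommGroup N] [AddCommGroup P] [Module R M] [Module R N] [Module R P]
    {f : M →ₗ[R] N} (hf : Function.Injective f) {g : P →ₗ[R] N} (hg : range g ≤ range f) :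
    ∃ h : P →ₗ[R] M, f ∘ₗ h = g := by
  refine ⟨(LinearEquiv.ofInjective f hf).symm ∘ₗ g.codRestrict _ fun x => hg ⟨x, rfl⟩, ?_⟩
  ext x
  simp

theorem mono_is_kernel_of_projection_general
    (R : Type) [Ring R] (𝒜 : ℤ → AddSubgroup R)
    (M : Type) [AddCommGroup M] [Module R M] (ℳ : ℤ → AddSubgroup M)
    (hM : SGModule R 𝒜 M ℳ)
    (N : Type) [AddCommGroup N] [Module R N] (𝒩 : ℤ → AddSubgroup N)
    (hN : SGModule R 𝒜 N 𝒩)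
    (f : M →ₗ[R] N) (hf : ∀ n : ℤ, ∀ x ∈ ℳ n, f x ∈ 𝒩 n)
    (hinj : Function.Injective f) :
    -- j ∘ f = 0 for j : N → N/Im(f) the canonical projection
    (LinearMap.range f).mkQ.comp f = 0 ∧
    -- universal property of the kernel
    ∀ (P : Type) [AddCommGroup P] [Module R P], ∀ (Pgrading : ℤ → AddSubgroup P),
      SGModule R 𝒜 P Pgrading →
      ∀ g : P →ₗ[R] N, (∀ n : ℤ, ∀ x ∈ Pgrading n, g x ∈ 𝒩 n) →
      (LinearMap.range f).mkQ.comp g = 0 →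
      ∃! h : P →ₗ[R] M, (∀ n : ℤ, ∀ x ∈ Pgrading n, h x ∈ ℳ n) ∧ f.comp h = g := by
  refine ⟨LinearMap.range_le_ker_iff.mp (Submodule.ker_mkQ _).ge, ?_⟩
  intro P _ _ Pgrading _ g hg hjg
  have hrange : LinearMap.range g ≤ LinearMap.range f := by
    rwa [← Submodule.ker_mkQ (LinearMap.range f), LinearMap.range_le_ker_iff]
  obtain ⟨h, hfh⟩ := LinearMap.exists_comp_eq_of_range_le hinj hrange
  have hℳ : ℳ = fun n => (𝒩 n).comap f.toAddMonoidHom :=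
    AddSubgroup.eq_comap_of_injective_of_mapsTo (DirectSum.IsInternal.addSubgroup_iSup_eq_top hM.1)
      (DirectSum.IsInternal.addSubgroup_iSupIndep hN.1) hinj hf
  have h_homogeneous : ∀ n, ∀ x ∈ Pgrading n, h x ∈ ℳ n := by
    intro n x hx
    rw [hℳ, AddSubgroup.mem_comap, LinearMap.toAddMonoidHom_coe, ← LinearMap.comp_apply, hfh]
    exact hg n x hx
  refine ⟨h, ⟨h_homogeneous, hfh⟩, fun h' ⟨_, hfh'⟩ => ?_⟩
  exact (LinearMap.cancel_left hinj).mp (hfh'.trans hfh.symm)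

theorem mono_is_kernel_of_projection
    (R : Type) [Ring R] (𝒜 : ℤ → AddSubgroup R) (hR : SGRing R 𝒜)
    (M : Type) [AddCommGroup M] [Module R M] (ℳ : ℤ → AddSubgroup M)
    (hM : SGModule R 𝒜 M ℳ)
    (N : Type) [AddCommGroup N] [Module R N] (𝒩 : ℤ → AddSubgroup N)
    (hN : SGModule R 𝒜 N 𝒩)
    (f : M →ₗ[R] N) (hf : ∀ n : ℤ, ∀ x ∈ ℳ n, f x ∈ 𝒩 n)
    (hinj : Function.Injective f) :
    -- j ∘ f = 0 for j : N → N/Im(f) the canonical projection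
    (LinearMap.range f).mkQ.comp f = 0 ∧
    -- universal property of the kernel
    ∀ (P : Type) [AddCommGroup P] [Module R P], ∀ (Pgrading : ℤ → AddSubgroup P),
      SGModule R 𝒜 P Pgrading →
      ∀ g : P →ₗ[R] N, (∀ n : ℤ, ∀ x ∈ Pgrading n, g x ∈ 𝒩 n) →
      (LinearMap.range f).mkQ.comp g = 0 →
      ∃! h : P →ₗ[R] M, (∀ n : ℤ, ∀ x ∈ Pgrading n, h x ∈ ℳ n) ∧ f.comp h = g :=
  mono_is_kernel_of_projection_general R 𝒜 M ℳ hM N 𝒩 hN f hf hinj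
end
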